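/- arXiv:2304.14200 — 7 statements merged into one kernel-verified Lean document; each statement's English description precedes it below -/
import Mathlib

section
/- For every real number r ≥ 2000, we have 4r(r/7)^(log₂(r/7)/4) + 8r(r/14)^(log₂(r/14)/4) ≤ r^(log₂(r)/4). -/
open Real

private lemma two_rpow_pow (c : ℝ) (n : ℕ) : ((2:ℝ) ^ c) ^ (n:ℕ) = (2:ℝ) ^ (c * n) := by
  rw [← Real.rpow_natCast ((2:ℝ) ^ c) n, ← Real.rpow_mul (by norm_num)]

private lemma pw (x : ℝ) (hx : 0 < x) :
    x ^ (Real.logb 2 x / 4) = (2:ℝ) ^ (Real.logb 2 x ^ 2 / 4) := by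
  have h : (2:ℝ) ^ (Real.logb 2 x ^ 2 / 4) = ((2:ℝ) ^ Real.logb 2 x) ^ (Real.logb 2 x / 4) := by
    rw [← Real.rpow_mul (by norm_num)]
    ring_nf
  rw [h, Real.rpow_logb two_pos (by norm_num) hx]

theorem bounds_technical_1 (r : ℝ) (hr : 2000 ≤ r) :
    4 * r * (r / 7) ^ (Real.logb 2 (r / 7) / 4)
      + 8 * r * (r / 14) ^ (Real.logb 2 (r / 14) / 4)
      ≤ r ^ (Real.logb 2 r / 4) := by
  have hr0 : (0:ℝ) < r := by linarith
  have h7 : (0:ℝ) < r / 7 := by linarith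
  have h14 : (0:ℝ) < r / 14 := by linarith
  rw [pw r hr0, pw _ h7, pw _ h14]
  have hdiv7 : Real.logb 2 (r / 7) = Real.logb 2 r - Real.logb 2 7 :=
    Real.logb_div (ne_of_gt hr0) (by norm_num)
  have hdiv14 : Real.logb 2 (r / 14) = Real.logb 2 r - (1 + Real.logb 2 7) := by
    rw [Real.logb_div (ne_of_gt hr0) (by norm_num),
      show (14:ℝ) = 2 * 7 by norm_num,
      Real.logb_mul (by norm_num) (by norm_num)]
    simp [Real.logb_self_eq_one]
  set L := Real.logb 2 r with hL
  set a := Real.logb 2 7 with ha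
  -- numeric bounds
  have hL10 : (10.9:ℝ) ≤ L := by
    have h1 : (10.9:ℝ) ≤ Real.logb 2 2000 := by
      rw [Real.le_logb_iff_rpow_le one_lt_two (by norm_num)]
      apply le_of_pow_le_pow_left₀ (n := 10) (by norm_num) (by norm_num)
      rw [two_rpow_pow]
      norm_num
    calc (10.9:ℝ) ≤ Real.logb 2 2000 := h1
      _ ≤ L := Real.logb_le_logb_of_le one_lt_two (by norm_num) hr
  have ha_lb : (2.8:ℝ) ≤ a := by
    rw [ha, Real.le_logb_iff_rpow_le one_lt_two (by norm_num)]
    apply le_of_pow_le_pow_left₀ (n := 10) (by norm_num) (by norm_num)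
    rw [two_rpow_pow]
    norm_num
  have ha_ub : a ≤ (2.81:ℝ) := by
    rw [ha, Real.logb_le_iff_le_rpow one_lt_two (by norm_num)]
    apply le_of_pow_le_pow_left₀ (n := 100) (by norm_num)
      (Real.rpow_nonneg (by norm_num) _)
    rw [two_rpow_pow]
    norm_num
    rw [show (281:ℕ) = 140 + 141 from rfl, pow_add]
    norm_num
  -- rewrite LHS as powers of 2
  have rw_r : r = (2:ℝ) ^ L := (Real.rpow_logb two_pos (by norm_num) hr0).symm
  have E1 : (4:ℝ) * (2:ℝ) ^ L * (2:ℝ) ^ ((L - a) ^ 2 / 4)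
      = (2:ℝ) ^ (2 + L + (L - a) ^ 2 / 4) := by
    rw [Real.rpow_add two_pos, Real.rpow_add two_pos,
      show ((2:ℝ) ^ (2:ℝ)) = 4 by norm_num]
  have E2 : (8:ℝ) * (2:ℝ) ^ L * (2:ℝ) ^ ((L - (1 + a)) ^ 2 / 4)
      = (2:ℝ) ^ (3 + L + (L - (1 + a)) ^ 2 / 4) := by
    rw [Real.rpow_add two_pos, Real.rpow_add two_pos,
      show ((2:ℝ) ^ (3:ℝ)) = 8 by norm_num]
  rw [hdiv7, hdiv14, rw_r, E1, E2]
  -- exponent inequalities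
  have e1 : 2 + L + (L - a) ^ 2 / 4 ≤ L ^ 2 / 4 - 1/4 := by
    nlinarith [mul_nonneg (by linarith : (0:ℝ) ≤ L - 10.9) (by linarith : (0:ℝ) ≤ 2*a - 4),
      sq_nonneg (a - 2.8)]
  have e2 : 3 + L + (L - (1 + a)) ^ 2 / 4 ≤ L ^ 2 / 4 - 3 := by
    nlinarith [mul_nonneg (by linarith : (0:ℝ) ≤ L - 10.9) (by linarith : (0:ℝ) ≤ 2*a - 2),
      sq_nonneg (a - 2.8)]
  have t1 : (2:ℝ) ^ (2 + L + (L - a) ^ 2 / 4) ≤ (2:ℝ) ^ (L ^ 2 / 4 - 1/4) :=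
    Real.rpow_le_rpow_of_exponent_le one_le_two e1
  have t2 : (2:ℝ) ^ (3 + L + (L - (1 + a)) ^ 2 / 4) ≤ (2:ℝ) ^ (L ^ 2 / 4 - 3) :=
    Real.rpow_le_rpow_of_exponent_le one_le_two e2
  have key : (2:ℝ) ^ (L ^ 2 / 4 - 1/4) + (2:ℝ) ^ (L ^ 2 / 4 - 3) ≤ (2:ℝ) ^ (L ^ 2 / 4) := by
    rw [Real.rpow_sub two_pos, Real.rpow_sub two_pos,
      show ((2:ℝ) ^ (3:ℝ)) = 8 by norm_num]
    have hE : (0:ℝ) < (2:ℝ) ^ (L ^ 2 / 4) := Real.rpow_pos_of_pos two_pos _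
    have hq : (8/7:ℝ) ≤ (2:ℝ) ^ (1/4:ℝ) := by
      apply le_of_pow_le_pow_left₀ (n := 4) (by norm_num)
        (Real.rpow_nonneg (by norm_num) _)
      rw [two_rpow_pow]
      norm_num
    have h1 : (2:ℝ) ^ (L ^ 2 / 4) / (2:ℝ) ^ (1/4:ℝ) ≤ (2:ℝ) ^ (L ^ 2 / 4) / (8/7) := by
      gcongr
    linarith
  calc (2:ℝ) ^ (2 + L + (L - a) ^ 2 / 4) + (2:ℝ) ^ (3 + L + (L - (1 + a)) ^ 2 / 4)
      ≤ (2:ℝ) ^ (L ^ 2 / 4 - 1/4) + (2:ℝ) ^ (L ^ 2 / 4 - 3) := add_le_add t1 t2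
    _ ≤ (2:ℝ) ^ (L ^ 2 / 4) := key
end

section
/- For every real number r ≥ 2000, we have 8r(r/28)^(log₂(r/28)/4) + 6r(r/21)^(log₂(r/21)/4) + 4r(r/14)^(log₂(r/14)/4) ≤ r^(log₂(r)/4). -/
lemma aux_pow_eq (p q : ℕ) (hq : q ≠ 0) : ((2:ℝ) ^ ((p:ℝ)/(q:ℝ))) ^ q = 2 ^ p := by
  rw [← Real.rpow_natCast ((2:ℝ) ^ ((p:ℝ)/(q:ℝ))) q, ← Real.rpow_mul (by norm_num),
    div_mul_cancel₀, Real.rpow_natCast]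
  exact_mod_cast hq

lemma logb_le_div (x : ℝ) (p q : ℕ) (hq : q ≠ 0) (hx : 0 < x) (h : x ^ q ≤ 2 ^ p) :
    Real.logb 2 x ≤ (p : ℝ) / q := by
  rw [Real.logb_le_iff_le_rpow one_lt_two hx]
  exact le_of_pow_le_pow_left₀ hq (by positivity) (by rw [aux_pow_eq p q hq]; exact h)

lemma div_le_logb (x : ℝ) (p q : ℕ) (hq : q ≠ 0) (hx : 0 < x) (h : 2 ^ p ≤ x ^ q) :
    (p : ℝ) / q ≤ Real.logb 2 x := by
  rw [Real.le_logb_iff_rpow_le one_lt_two hx]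
  exact le_of_pow_le_pow_left₀ hq hx.le (by rw [aux_pow_eq p q hq]; exact h)

lemma key_term (r c k : ℝ) (hr : 0 < r) (hc : 0 < c) (hk : 0 < k)
    (h32 : 3 * k ≤ 32)
    (hd : 5 ≤ Real.logb 2 r * Real.logb 2 c / 2 - Real.logb 2 c ^ 2 / 4 - Real.logb 2 r) :
    k * r * (r / c) ^ (Real.logb 2 (r / c) / 4) ≤ 1/3 * r ^ (Real.logb 2 r / 4) := by
  set s := Real.logb 2 r with hsdef
  set a := Real.logb 2 c with hadef
  have hrs : r = (2:ℝ) ^ s := (Real.rpow_logb two_pos (by norm_num) hr).symm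
  have hcs : c = (2:ℝ) ^ a := (Real.rpow_logb two_pos (by norm_num) hc).symm
  have hdiv : r / c = (2:ℝ) ^ (s - a) := by
    rw [Real.rpow_sub two_pos, ← hrs, ← hcs]
  have hlog : Real.logb 2 (r / c) = s - a := by
    rw [Real.logb_div hr.ne' hc.ne']
  set X : ℝ := s + (s - a) * ((s - a) / 4) with hX
  set Y : ℝ := s * (s / 4) with hY
  have hL : k * r * (r / c) ^ (Real.logb 2 (r / c) / 4) = k * 2 ^ X := by
    rw [hlog, hdiv]
    nth_rewrite 1 [hrs]
    rw [← Real.rpow_mul (by norm_num), mul_assoc, ← Real.rpow_add two_pos]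
  have hR : r ^ (s / 4) = (2:ℝ) ^ Y := by
    nth_rewrite 1 [hrs]
    rw [← Real.rpow_mul (by norm_num)]
  rw [hL, hR]
  have h5 : (5:ℝ) ≤ Y - X := by
    have : Y - X = s * a / 2 - a ^ 2 / 4 - s := by rw [hX, hY]; ring
    rw [this]; linarith
  have h2d : (32:ℝ) ≤ (2:ℝ) ^ (Y - X) := by
    calc (32:ℝ) = (2:ℝ) ^ ((5:ℕ):ℝ) := by rw [Real.rpow_natCast]; norm_num
    _ ≤ _ := Real.rpow_le_rpow_of_exponent_le one_le_two (by exact_mod_cast h5)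
  have hsplit : (2:ℝ) ^ Y = (2:ℝ) ^ X * (2:ℝ) ^ (Y - X) := by
    rw [← Real.rpow_add two_pos]; ring_nf
  have hXpos : (0:ℝ) < (2:ℝ) ^ X := Real.rpow_pos_of_pos two_pos X
  rw [hsplit]
  nlinarith [hXpos, h2d, mul_le_mul_of_nonneg_left h2d hXpos.le]

theorem bounds_technical_2 (r : ℝ) (hr : 2000 ≤ r) :
    8 * r * (r / 28) ^ (Real.logb 2 (r / 28) / 4)
      + 6 * r * (r / 21) ^ (Real.logb 2 (r / 21) / 4)
      + 4 * r * (r / 14) ^ (Real.logb 2 (r / 14) / 4)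
      ≤ r ^ (Real.logb 2 r / 4) := by
  have hr0 : (0:ℝ) < r := by linarith
  have hs : (10:ℝ) ≤ Real.logb 2 r := by
    have := div_le_logb r 10 1 (by norm_num) hr0 (by norm_num; linarith)
    simpa using this
  -- bounds on logb 2 28 ∈ [19/4, 29/6]
  have h28l : (19:ℝ)/4 ≤ Real.logb 2 28 := by
    have := div_le_logb 28 19 4 (by norm_num) (by norm_num) (by norm_num)
    simpa using this
  have h28u : Real.logb 2 28 ≤ (29:ℝ)/6 := by
    have := logb_le_div 28 29 6 (by norm_num) (by norm_num) (by norm_num)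
    simpa using this
  have h21l : (35:ℝ)/8 ≤ Real.logb 2 21 := by
    have := div_le_logb 21 35 8 (by norm_num) (by norm_num) (by norm_num)
    simpa using this
  have h21u : Real.logb 2 21 ≤ (22:ℝ)/5 := by
    have := logb_le_div 21 22 5 (by norm_num) (by norm_num) (by norm_num)
    simpa using this
  have h14l : (15:ℝ)/4 ≤ Real.logb 2 14 := by
    have := div_le_logb 14 15 4 (by norm_num) (by norm_num) (by norm_num)
    simpa using this
  have h14u : Real.logb 2 14 ≤ (61:ℝ)/16 := by
    have := logb_le_div 14 61 16 (by norm_num) (by norm_num) (by norm_num)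
    simpa using this
  have t1 := key_term r 28 8 hr0 (by norm_num) (by norm_num) (by norm_num)
    (by nlinarith [hs, h28l, h28u])
  have t2 := key_term r 21 6 hr0 (by norm_num) (by norm_num) (by norm_num)
    (by nlinarith [hs, h21l, h21u])
  have t3 := key_term r 14 4 hr0 (by norm_num) (by norm_num) (by norm_num)
    (by nlinarith [hs, h14l, h14u])
  linarith
end

section
/- For every real number r ≥ 2000, we have (2r+10)(r/10)^(log₂(r/10)/4) + (r/5+5)(r/5)^(log₂(r/5)/4) ≤ r^(log₂(r)/4). -/
private lemma aux_div (l2 A x w : ℝ) (hl2 : 0 < l2)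
    (h : 4 * l2 * A + x ^ 2 + 4 * l2 ^ 2 ≤ w ^ 2) :
    A + x * (x / l2 / 4) ≤ w * (w / l2 / 4) - l2 := by
  have h4 : (0:ℝ) < 4 * l2 := by linarith
  have e : A + x * (x / l2 / 4) - (w * (w / l2 / 4) - l2)
      = (4 * l2 * A + x ^ 2 + 4 * l2 ^ 2 - w ^ 2) / (4 * l2) := by
    field_simp
    ring
  have hq : (4 * l2 * A + x ^ 2 + 4 * l2 ^ 2 - w ^ 2) / (4 * l2) ≤ 0 :=
    div_nonpos_of_nonpos_of_nonneg (by linarith) h4.le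
  linarith [e ▸ hq]

theorem bounds_technical_3 (r : ℝ) (hr : 2000 ≤ r) :
    (2 * r + 10) * (r / 10) ^ (Real.logb 2 (r / 10) / 4)
      + (r / 5 + 5) * (r / 5) ^ (Real.logb 2 (r / 5) / 4)
      ≤ r ^ (Real.logb 2 r / 4) := by
  have hr0 : (0:ℝ) < r := by linarith
  have h10 : (0:ℝ) < r / 10 := by linarith
  have h5 : (0:ℝ) < r / 5 := by linarith
  have hl2pos : 0 < Real.log 2 := Real.log_pos (by norm_num)
  have hl2u : Real.log 2 < 0.6931472 := by linarith [Real.log_two_lt_d9]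
  have hl2l : (0.6931471 : ℝ) < Real.log 2 := by linarith [Real.log_two_gt_d9]
  -- log 5 > 1.6
  have hl5l : (1.6:ℝ) < Real.log 5 := by
    have h1 : Real.exp 1 ^ (8:ℕ) < 2.7182818286 ^ (8:ℕ) :=
      pow_lt_pow_left₀ Real.exp_one_lt_d9 (Real.exp_pos 1).le (by norm_num)
    have h2 : (2.7182818286:ℝ) ^ (8:ℕ) < (5:ℝ) ^ (5:ℕ) := by norm_num
    have h3 : Real.exp 8 < (5:ℝ) ^ (5:ℕ) := by
      have : Real.exp 8 = Real.exp 1 ^ (8:ℕ) := by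
        rw [← Real.exp_nat_mul]; norm_num
      rw [this]; linarith
    have h4 := Real.log_lt_log (Real.exp_pos 8) h3
    rw [Real.log_exp, Real.log_pow] at h4
    push_cast at h4
    linarith
  have hl5u : Real.log 5 < 3 * Real.log 2 := by
    have h := Real.log_lt_log (by norm_num : (0:ℝ) < 5) (by norm_num : (5:ℝ) < 2 ^ (3:ℕ))
    rw [Real.log_pow] at h
    push_cast at h
    linarith
  have hl3 : Real.log 3 < 2 * Real.log 2 := by
    have h := Real.log_lt_log (by norm_num : (0:ℝ) < 3) (by norm_num : (3:ℝ) < 2 ^ (2:ℕ))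
    rw [Real.log_pow] at h
    push_cast at h
    linarith
  set w := Real.log r with hwdef
  have hw : 4 * Real.log 2 + 3 * Real.log 5 ≤ w := by
    have h1 : Real.log 2000 ≤ w := Real.log_le_log (by norm_num) hr
    have h2 : Real.log 2000 = 4 * Real.log 2 + 3 * Real.log 5 := by
      rw [show (2000:ℝ) = 2 ^ (4:ℕ) * 5 ^ (3:ℕ) by norm_num,
        Real.log_mul (by norm_num) (by norm_num), Real.log_pow, Real.log_pow]
      push_cast; ring
    linarith
  have hlog10 : Real.log (r / 10) = w - (Real.log 2 + Real.log 5) := by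
    rw [Real.log_div hr0.ne' (by norm_num),
      show (10:ℝ) = 2 * 5 by norm_num, Real.log_mul (by norm_num) (by norm_num)]
  have hlog5 : Real.log (r / 5) = w - Real.log 5 := by
    rw [Real.log_div hr0.ne' (by norm_num)]
  rw [Real.rpow_def_of_pos h10, Real.rpow_def_of_pos h5, Real.rpow_def_of_pos hr0]
  simp only [Real.logb, hlog10, hlog5]
  set s := w * (w / Real.log 2 / 4) with hs
  -- term 1
  have t1 : (2 * r + 10) * Real.exp ((w - (Real.log 2 + Real.log 5))
      * ((w - (Real.log 2 + Real.log 5)) / Real.log 2 / 4)) ≤ Real.exp s / 2 := by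
    have hpos : (0:ℝ) < 2 * r + 10 := by linarith
    have hA : Real.log (2 * r + 10) ≤ Real.log 3 + w := by
      have hle : 2 * r + 10 ≤ 3 * r := by linarith
      have := Real.log_le_log (by linarith) hle
      rwa [Real.log_mul (by norm_num) hr0.ne'] at this
    have key : Real.log (2 * r + 10) + (w - (Real.log 2 + Real.log 5))
        * ((w - (Real.log 2 + Real.log 5)) / Real.log 2 / 4) ≤ s - Real.log 2 := by
      have hscal : 4 * Real.log 2 * Real.log (2 * r + 10)
          + (w - (Real.log 2 + Real.log 5)) ^ 2 + 4 * Real.log 2 ^ 2 ≤ w ^ 2 := by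
        nlinarith [mul_nonneg (by linarith : (0:ℝ) ≤ w - (4 * Real.log 2 + 3 * Real.log 5))
            (by linarith : (0:ℝ) ≤ 2 * Real.log 5 - 2 * Real.log 2),
          mul_pos (sub_pos.2 hl2u) (by linarith : (0:ℝ) < 0.6931472 + Real.log 2),
          mul_nonneg (by linarith : (0:ℝ) ≤ Real.log 5 - 1.6)
            (by linarith : (0:ℝ) ≤ Real.log 5 + 1.6),
          mul_pos hl2pos hl2pos]
      have := aux_div (Real.log 2) (Real.log (2 * r + 10))
        (w - (Real.log 2 + Real.log 5)) w hl2pos hscal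
      rw [hs]
      linarith
    calc (2 * r + 10) * Real.exp ((w - (Real.log 2 + Real.log 5))
        * ((w - (Real.log 2 + Real.log 5)) / Real.log 2 / 4))
        = Real.exp (Real.log (2 * r + 10) + (w - (Real.log 2 + Real.log 5))
          * ((w - (Real.log 2 + Real.log 5)) / Real.log 2 / 4)) := by
          rw [Real.exp_add, Real.exp_log hpos]
      _ ≤ Real.exp (s - Real.log 2) := Real.exp_le_exp.2 key
      _ = Real.exp s / 2 := by
          rw [Real.exp_sub, Real.exp_log (by norm_num : (0:ℝ) < 2)]
  -- term 2
  have t2 : (r / 5 + 5) * Real.exp ((w - Real.log 5)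
      * ((w - Real.log 5) / Real.log 2 / 4)) ≤ Real.exp s / 2 := by
    have hpos : (0:ℝ) < r / 5 + 5 := by linarith
    have hA : Real.log (r / 5 + 5) ≤ w - 2 * Real.log 2 := by
      have hle : r / 5 + 5 ≤ r / 4 := by linarith
      have h := Real.log_le_log hpos hle
      rw [Real.log_div hr0.ne' (by norm_num),
        show (4:ℝ) = 2 ^ (2:ℕ) by norm_num, Real.log_pow] at h
      push_cast at h
      linarith
    have key : Real.log (r / 5 + 5) + (w - Real.log 5)
        * ((w - Real.log 5) / Real.log 2 / 4) ≤ s - Real.log 2 := by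
      have hscal : 4 * Real.log 2 * Real.log (r / 5 + 5)
          + (w - Real.log 5) ^ 2 + 4 * Real.log 2 ^ 2 ≤ w ^ 2 := by
        nlinarith [mul_nonneg (by linarith : (0:ℝ) ≤ w - (4 * Real.log 2 + 3 * Real.log 5))
            (by linarith : (0:ℝ) ≤ 2 * Real.log 5 - 4 * Real.log 2),
          mul_pos (sub_pos.2 hl2u) (by linarith : (0:ℝ) < 0.6931472 + Real.log 2),
          mul_nonneg (by linarith : (0:ℝ) ≤ Real.log 5 - 1.6)
            (by linarith : (0:ℝ) ≤ Real.log 5 + 1.6),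
          mul_pos hl2pos hl2pos]
      have := aux_div (Real.log 2) (Real.log (r / 5 + 5))
        (w - Real.log 5) w hl2pos hscal
      rw [hs]
      linarith
    calc (r / 5 + 5) * Real.exp ((w - Real.log 5)
        * ((w - Real.log 5) / Real.log 2 / 4))
        = Real.exp (Real.log (r / 5 + 5) + (w - Real.log 5)
          * ((w - Real.log 5) / Real.log 2 / 4)) := by
          rw [Real.exp_add, Real.exp_log hpos]
      _ ≤ Real.exp (s - Real.log 2) := Real.exp_le_exp.2 key
      _ = Real.exp s / 2 := by
          rw [Real.exp_sub, Real.exp_log (by norm_num : (0:ℝ) < 2)]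
  -- combine
  have : Real.exp s / 2 + Real.exp s / 2 = Real.exp s := by ring
  calc (2 * r + 10) * Real.exp ((w - (Real.log 2 + Real.log 5))
        * ((w - (Real.log 2 + Real.log 5)) / Real.log 2 / 4))
      + (r / 5 + 5) * Real.exp ((w - Real.log 5)
        * ((w - Real.log 5) / Real.log 2 / 4))
      ≤ Real.exp s / 2 + Real.exp s / 2 := add_le_add t1 t2
    _ = Real.exp s := by ring
end

section
/- Let C be a finite solvable group and let p be a prime divisor of |C| such that for every prime power q > 1 dividing |C| with p not dividing q, p is coprime to q − 1. Then C has a normal Sylow p-subgroup. -/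
/-!
Induct on the order. A nontrivial solvable group has a nontrivial normal `q`-subgroup `N` for some
prime `q` (a Sylow subgroup of the last nontrivial term of the derived series). By induction `G ⧸ N`
has a normal Sylow `p`-subgroup `P'`; its preimage `H` is normal of index prime to `p`. The number
of Sylow `p`-subgroups of `H` is `≡ 1 [MOD p]` and divides `|H| = |N| * |P'|`, hence divides
`|N| = q ^ k`; the coprimality hypothesis then forces it to be `1`. So the Sylow `p`-subgroup of `H`
is characteristic in `H`, hence normal in `G`, and it is a Sylow subgroup of `G`.
-/

open Subgroup

theorem Nat.eq_one_of_dvd_prime_pow_of_modEq_one {p q k n m : ℕ} (hp : p.Prime) (hq : q.Prime)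
    (hnq : n ∣ q ^ k) (hnm : n ∣ m) (hmod : n ≡ 1 [MOD p])
    (h : ∀ r : ℕ, IsPrimePow r → r ∣ m → ¬ p ∣ r → Nat.Coprime p (r - 1)) : n = 1 := by
  by_contra hn
  obtain ⟨j, -, rfl⟩ := (Nat.dvd_prime_pow hq).mp hnq
  have hj : j ≠ 0 := by rintro rfl; exact hn (pow_zero q)
  have hpn : ¬ p ∣ q ^ j := fun hpn =>
    hp.one_lt.ne' (Nat.dvd_one.mp (Nat.modEq_zero_iff_dvd.mp
      (hmod.symm.trans (Nat.modEq_zero_iff_dvd.mpr hpn))))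
  have hp1 : p ∣ q ^ j - 1 := (Nat.modEq_iff_dvd' (Nat.one_le_pow _ _ hq.pos)).mp hmod.symm
  exact hp.one_lt.ne' ((h _ (hq.isPrimePow.pow hj) hnm hpn).eq_one_of_dvd hp1)

theorem QuotientGroup.card_comap_mk' {G : Type*} [Group G] (N : Subgroup G) [N.Normal]
    (K : Subgroup (G ⧸ N)) : Nat.card (K.comap (QuotientGroup.mk' N)) = Nat.card N * Nat.card K :=
  QuotientGroup.card_preimage_mk N K

theorem Group.IsSolvable.exists_normal_isMulCommutative_ne_bot (G : Type*) [Group G]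
    [Group.IsSolvable G] [Nontrivial G] :
    ∃ A : Subgroup G, A.Normal ∧ A ≠ ⊥ ∧ IsMulCommutative A := by
  classical
  have hex : ∃ n, derivedSeries G n = ⊥ := Group.IsSolvable.solvable
  obtain ⟨k, hk⟩ : ∃ k, Nat.find hex = k + 1 := Nat.exists_eq_add_one.mpr <|
    Nat.pos_of_ne_zero fun h0 => top_ne_bot (h0 ▸ Nat.find_spec hex)
  refine ⟨derivedSeries G k, derivedSeries_normal G k, Nat.find_min hex (by omega), ?_⟩
  have hcomm : ⁅derivedSeries G k, derivedSeries G k⁆ = ⊥ := by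
    simpa only [hk, derivedSeries_succ] using Nat.find_spec hex
  exact le_centralizer_iff_isMulCommutative.mp (commutator_eq_bot_iff_le_centralizer.mp hcomm)

theorem Group.IsSolvable.exists_normal_isPGroup_ne_bot (G : Type*) [Group G] [Finite G]
    [Group.IsSolvable G] [Nontrivial G] :
    ∃ (q : ℕ) (N : Subgroup G), q.Prime ∧ N.Normal ∧ N ≠ ⊥ ∧ IsPGroup q N := by
  obtain ⟨A, hA, hA_ne_bot, hA_comm⟩ := exists_normal_isMulCommutative_ne_bot G
  have hq : (Nat.card A).minFac.Prime := Nat.minFac_prime (by rwa [Ne, card_eq_one])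
  have : Fact (Nat.card A).minFac.Prime := ⟨hq⟩
  obtain ⟨Q⟩ : Nonempty (Sylow (Nat.card A).minFac A) := inferInstance
  have := Q.characteristic_of_normal inferInstance
  refine ⟨_, (Q : Subgroup A).map A.subtype, hq, inferInstance, ?_, Q.2.map _⟩
  rw [Ne, map_eq_bot_iff_of_injective _ A.subtype_injective]
  exact Q.ne_bot_of_dvd_card (Nat.minFac_dvd _)

theorem Sylow.exists_normal_of_normal_of_not_dvd_index {G : Type*} [Group G] [Finite G] {p : ℕ}
    [Fact p.Prime] {H : Subgroup G} [H.Normal] (hH : ¬ p ∣ H.index) (P : Sylow p H)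
    (hP : (P : Subgroup H).Normal) : ∃ Q : Sylow p G, (Q : Subgroup G).Normal := by
  have := P.characteristic_of_normal hP
  refine ⟨(P.2.map H.subtype).toSylow ?_, by rw [IsPGroup.toSylow_coe]; infer_instance⟩
  rw [index_map_subtype]
  exact Nat.Prime.not_dvd_mul Fact.out P.not_dvd_index hH

theorem exists_normal_sylow_of_normal_sylow_quotient {G : Type*} [Group G] [Finite G] {p q : ℕ}
    [Fact p.Prime] (hq : q.Prime) {N : Subgroup G} [N.Normal] (hN : IsPGroup q N)
    (P' : Sylow p (G ⧸ N)) (hP' : (P' : Subgroup (G ⧸ N)).Normal)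
    (h : ∀ r : ℕ, IsPrimePow r → r ∣ Nat.card G → ¬ p ∣ r → Nat.Coprime p (r - 1)) :
    ∃ P : Sylow p G, (P : Subgroup G).Normal := by
  set H := (P' : Subgroup (G ⧸ N)).comap (QuotientGroup.mk' N)
  have : H.Normal := hP'.comap _
  have hH : ¬ p ∣ H.index := by
    rw [index_comap_of_surjective _ (QuotientGroup.mk'_surjective N)]
    exact P'.not_dvd_index
  obtain ⟨P⟩ : Nonempty (Sylow p H) := inferInstance
  have hcard : Nat.card (Sylow p H) = 1 := by
    have := Fact.mk hq
    obtain ⟨k, hk⟩ := IsPGroup.iff_card.mp hN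
    obtain ⟨a, ha⟩ := IsPGroup.iff_card.mp P'.2
    have hmod := card_sylow_modEq_one p H
    have hcop : (Nat.card (Sylow p H)).Coprime (Nat.card P') := by
      rw [ha]
      exact Nat.Coprime.pow_right _ (by simpa using hmod.gcd_eq)
    have hdvd : Nat.card (Sylow p H) ∣ Nat.card N := hcop.dvd_of_dvd_mul_right
      (QuotientGroup.card_comap_mk' N P' ▸ P.card_dvd_index.trans (index_dvd_card _))
    exact Nat.eq_one_of_dvd_prime_pow_of_modEq_one Fact.out hq (hk ▸ hdvd)
      (hdvd.trans N.card_subgroup_dvd_card) hmod h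
  have : Subsingleton (Sylow p H) := (Nat.card_eq_one_iff_unique.mp hcard).1
  exact P.exists_normal_of_normal_of_not_dvd_index hH P.normal_of_subsingleton

theorem exists_normal_sylow_of_coprime {G : Type*} [Group G] [Finite G] [Group.IsSolvable G]
    {p : ℕ} [Fact p.Prime]
    (h : ∀ q : ℕ, IsPrimePow q → q ∣ Nat.card G → ¬ p ∣ q → Nat.Coprime p (q - 1)) :
    ∃ P : Sylow p G, (P : Subgroup G).Normal := by
  induction hn : Nat.card G using Nat.strong_induction_on generalizing G with
  | _ n ih =>
  rcases subsingleton_or_nontrivial G with hG | hG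
  · obtain ⟨P⟩ : Nonempty (Sylow p G) := inferInstance
    exact ⟨P, Subsingleton.elim ⊤ (P : Subgroup G) ▸ normal_top⟩
  obtain ⟨q, N, hq, hN, hN_ne_bot, hNq⟩ := Group.IsSolvable.exists_normal_isPGroup_ne_bot G
  have hlt : Nat.card (G ⧸ N) < n := by
    rw [← hn, N.card_eq_card_quotient_mul_card_subgroup]
    exact lt_mul_of_one_lt_right Nat.card_pos ((one_lt_card_iff_ne_bot N).mpr hN_ne_bot)
  obtain ⟨P', hP'⟩ := ih _ hlt (fun r hr hrd => h r hr (hrd.trans N.card_quotient_dvd_card)) rfl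
  exact exists_normal_sylow_of_normal_sylow_quotient hq hNq P' hP' h

theorem normal_sylow_of_coprime_condition_general {C : Type*} [Group C] [Fintype C] [Group.IsSolvable C]
    (p : ℕ) (hp : p.Prime)
    (h : ∀ q : ℕ, IsPrimePow q → q ∣ Fintype.card C → ¬ p ∣ q → Nat.Coprime p (q - 1)) :
    ∃ P : Sylow p C, (P : Subgroup C).Normal := by
  have := Fact.mk hp
  exact exists_normal_sylow_of_coprime (by simpa only [Nat.card_eq_fintype_card] using h)

theorem normal_sylow_of_coprime_condition {C : Type*} [Group C] [Fintype C] [Group.IsSolvable C]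
    (p : ℕ) (hp : p.Prime) (hdvd : p ∣ Fintype.card C)
    (h : ∀ q : ℕ, IsPrimePow q → q ∣ Fintype.card C → ¬ p ∣ q → Nat.Coprime p (q - 1)) :
    ∃ P : Sylow p C, (P : Subgroup C).Normal :=
  normal_sylow_of_coprime_condition_general p hp h
end

section
/- Define c(p) = (∏_{i≥1} 1/(1 − p^{-i})) · (−1 + 2∑_{k≥0} p^{-k²}) for a prime p. Then c(p) > (p+2)/(p−1). -/
set_option maxHeartbeats 800000

noncomputable def cConst (p : ℕ) : ℝ :=
  (∏' i : ℕ, (1 - ((p : ℝ))⁻¹ ^ (i + 1))⁻¹) *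
    (-1 + 2 * ∑' k : ℕ, ((p : ℝ))⁻¹ ^ (k ^ 2))

theorem cConst_gt_first (p : ℕ) (hp : p.Prime) :
    ((p : ℝ) + 2) / ((p : ℝ) - 1) < cConst p := by
  have hp2 : (2:ℝ) ≤ p := by exact_mod_cast hp.two_le
  have hp0 : (0:ℝ) < p := by linarith
  set x : ℝ := (p:ℝ)⁻¹ with hxdef
  have hx0 : 0 < x := inv_pos.2 hp0
  have hx1 : x < 1 := by
    rw [hxdef]
    rw [inv_lt_one_iff₀]
    right; linarith
  -- basic facts about each factor
  have hpow : ∀ i : ℕ, 0 < 1 - x ^ (i + 1) := by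
    intro i
    have : x ^ (i + 1) < 1 := pow_lt_one₀ hx0.le hx1 (Nat.succ_ne_zero i)
    linarith
  have hone : ∀ i : ℕ, (1 : ℝ) ≤ (1 - x ^ (i + 1))⁻¹ := by
    intro i
    rw [one_le_inv_iff₀]
    refine ⟨hpow i, ?_⟩
    have : 0 < x ^ (i + 1) := pow_pos hx0 _
    linarith
  -- summability of the logs, hence multipliability
  have hlogsum : Summable fun i : ℕ => Real.log ((1 - x ^ (i + 1))⁻¹) := by
    apply Summable.of_nonneg_of_le
    · intro i; exact Real.log_nonneg (hone i)
    · intro i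
      show Real.log ((1 - x ^ (i + 1))⁻¹) ≤ x ^ (i + 1) * (1 - x)⁻¹
      have h1 := Real.log_le_sub_one_of_pos (inv_pos.2 (hpow i))
      have hne : 1 - x ^ (i + 1) ≠ 0 := ne_of_gt (hpow i)
      have h2 : (1 - x ^ (i + 1))⁻¹ - 1 = x ^ (i + 1) * (1 - x ^ (i + 1))⁻¹ := by
        field_simp
        ring
      have h3 : (1 - x ^ (i + 1))⁻¹ ≤ (1 - x)⁻¹ := by
        apply inv_anti₀ (by linarith)
        have : x ^ (i + 1) ≤ x := by
          calc x ^ (i + 1) ≤ x ^ 1 := pow_le_pow_of_le_one hx0.le hx1.le (by omega)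
          _ = x := pow_one x
        linarith
      calc Real.log ((1 - x ^ (i + 1))⁻¹) ≤ (1 - x ^ (i + 1))⁻¹ - 1 := h1
        _ = x ^ (i + 1) * (1 - x ^ (i + 1))⁻¹ := h2
        _ ≤ x ^ (i + 1) * (1 - x)⁻¹ := by
            apply mul_le_mul_of_nonneg_left h3 (pow_nonneg hx0.le _)
    · have h := (summable_geometric_of_lt_one hx0.le hx1).mul_left (x * (1 - x)⁻¹)
      exact h.congr (fun i => by ring)
  have htp : (∏' i : ℕ, (1 - x ^ (i + 1))⁻¹) =
      Real.exp (∑' i : ℕ, Real.log ((1 - x ^ (i + 1))⁻¹)) := by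
    have h := Real.rexp_tsum_eq_tprod (f := fun i => (1 - x ^ (i + 1))⁻¹)
      (fun i => inv_pos.2 (hpow i))
      hlogsum
    exact h.symm
  -- lower bound for the product
  have hprod_ge : (1 - x)⁻¹ ≤ ∏' i : ℕ, (1 - x ^ (i + 1))⁻¹ := by
    rw [htp]
    have h0 : Real.log ((1 - x ^ (0 + 1))⁻¹) ≤
        ∑' i : ℕ, Real.log ((1 - x ^ (i + 1))⁻¹) :=
      Summable.le_tsum hlogsum 0 (fun j _ => Real.log_nonneg (hone j))
    have h1 : (1 - x)⁻¹ = Real.exp (Real.log ((1 - x ^ (0 + 1))⁻¹)) := by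
      rw [Real.exp_log (inv_pos.2 (hpow 0))]; norm_num
    rw [h1]
    exact Real.exp_le_exp.2 h0
  have hprod_pos : 0 < ∏' i : ℕ, (1 - x ^ (i + 1))⁻¹ := by
    rw [htp]; exact Real.exp_pos _
  -- the series
  have hS : Summable fun k : ℕ => x ^ (k ^ 2) := by
    apply Summable.of_nonneg_of_le (fun k => pow_nonneg hx0.le _)
      (fun k => pow_le_pow_of_le_one hx0.le hx1.le (Nat.le_self_pow two_ne_zero k))
    exact summable_geometric_of_lt_one hx0.le hx1
  have hSsum : 1 + x + x ^ 4 ≤ ∑' k : ℕ, x ^ (k ^ 2) := by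
    have := Summable.sum_le_tsum (Finset.range 3) (fun k _ => pow_nonneg hx0.le _) hS
    simpa [Finset.sum_range_succ] using this
  have hsecond : 1 + 2 * x < -1 + 2 * ∑' k : ℕ, x ^ (k ^ 2) := by
    have hx4 : 0 < x ^ 4 := pow_pos hx0 4
    nlinarith
  -- combine
  have key : (1 - x)⁻¹ * (1 + 2 * x) <
      (∏' i : ℕ, (1 - x ^ (i + 1))⁻¹) * (-1 + 2 * ∑' k : ℕ, x ^ (k ^ 2)) :=
    mul_lt_mul' hprod_ge hsecond (by linarith) hprod_pos
  have heq : ((p : ℝ) + 2) / ((p : ℝ) - 1) = (1 - x)⁻¹ * (1 + 2 * x) := by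
    rw [hxdef]
    have h1 : (p:ℝ) ≠ 0 := ne_of_gt hp0
    have h2 : (p:ℝ) - 1 ≠ 0 := by intro h; nlinarith [h]
    field_simp
  unfold cConst
  rw [heq]
  exact key
end

section
/- Define c(p) = (∏_{i≥1} 1/(1 − p^{-i})) · (−1 + 2∑_{k≥0} p^{-k²}) for a prime p. Then c(p) > (p³ + 2p²)/((p−1)(p²−1)). -/
theorem cConst_gt_second (p : ℕ) (hp : p.Prime) :
    ((p : ℝ) ^ 3 + 2 * (p : ℝ) ^ 2) / (((p : ℝ) - 1) * ((p : ℝ) ^ 2 - 1)) < cConst p := by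
  have hx : (2 : ℝ) ≤ (p : ℝ) := by exact_mod_cast hp.two_le
  set x : ℝ := (p : ℝ) with hxdef
  set q : ℝ := x⁻¹ with hqdef
  have hx0 : 0 < x := by linarith
  have hq0 : 0 < q := inv_pos.mpr hx0
  have hqhalf : q ≤ 1 / 2 := by
    rw [hqdef]
    rw [inv_le_comm₀ hx0 (by norm_num)]
    linarith
  have hq1 : q < 1 := by linarith
  -- positivity of the factors
  have hfac : ∀ i : ℕ, 0 < 1 - q ^ (i + 1) := by
    intro i
    have : q ^ (i + 1) ≤ q ^ 1 := pow_le_pow_of_le_one hq0.le hq1.le (by omega)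
    simp only [pow_one] at this
    linarith
  have hfac1 : ∀ i : ℕ, q ^ (i + 1) ≤ q := by
    intro i
    have : q ^ (i + 1) ≤ q ^ 1 := pow_le_pow_of_le_one hq0.le hq1.le (by omega)
    simpa using this
  -- summability of the logs
  have hgeom : Summable fun i : ℕ => q ^ (i + 1) := by
    simpa [pow_succ] using (summable_geometric_of_lt_one hq0.le hq1).mul_right q
  have hlogsum : Summable fun i : ℕ => -Real.log (1 - q ^ (i + 1)) := by
    apply Summable.of_nonneg_of_le (f := fun i => 2 * q ^ (i + 1))
    · intro i
      have h1 : Real.log (1 - q ^ (i + 1)) ≤ 0 := by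
        apply Real.log_nonpos (hfac i).le
        nlinarith [pow_nonneg hq0.le (i + 1)]
      linarith
    · intro i
      have hpos := hfac i
      have hle : q ^ (i + 1) ≤ 1 / 2 := le_trans (hfac1 i) hqhalf
      have h1 : Real.log (1 - q ^ (i + 1))⁻¹ ≤ (1 - q ^ (i + 1))⁻¹ - 1 :=
        Real.log_le_sub_one_of_pos (inv_pos.mpr hpos)
      rw [Real.log_inv] at h1
      have h2 : (1 - q ^ (i + 1))⁻¹ ≤ 1 + 2 * q ^ (i + 1) := by
        rw [inv_le_iff_one_le_mul₀ hpos]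
        nlinarith [pow_nonneg hq0.le (i + 1)]
      linarith
    · exact hgeom.mul_left 2
  -- the product equals exp of the sum of logs
  have hlognn : ∀ i : ℕ, 0 ≤ -Real.log (1 - q ^ (i + 1)) := by
    intro i
    have h1 : Real.log (1 - q ^ (i + 1)) ≤ 0 := by
      apply Real.log_nonpos (hfac i).le
      nlinarith [pow_nonneg hq0.le (i + 1)]
    linarith
  have hProd : HasProd (fun i : ℕ => (1 - q ^ (i + 1))⁻¹)
      (Real.exp (∑' i : ℕ, -Real.log (1 - q ^ (i + 1)))) := by
    have ha := hlogsum.hasSum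
    have h2 := (HasSum.exp ha : HasProd (NormedSpace.exp ∘ _) _)
    rw [← Real.exp_eq_exp_ℝ] at h2
    refine h2.congr_fun fun i => ?_
    simp only [Function.comp_apply]
    rw [Real.exp_neg, Real.exp_log (hfac i)]
  -- lower bound for the product
  have hP : (1 - q)⁻¹ * (1 - q ^ 2)⁻¹ ≤ ∏' i : ℕ, (1 - q ^ (i + 1))⁻¹ := by
    rw [hProd.tprod_eq]
    have hsle := Summable.sum_le_tsum (f := fun i : ℕ => -Real.log (1 - q ^ (i + 1)))
      ({0, 1} : Finset ℕ) (fun i _ => hlognn i) hlogsum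
    rw [Finset.sum_pair (by norm_num)] at hsle
    calc (1 - q)⁻¹ * (1 - q ^ 2)⁻¹
        = Real.exp (-Real.log (1 - q ^ (0 + 1)) + -Real.log (1 - q ^ (1 + 1))) := by
          rw [Real.exp_add, Real.exp_neg, Real.exp_neg, Real.exp_log (hfac 0),
            Real.exp_log (hfac 1)]
          norm_num
      _ ≤ _ := Real.exp_le_exp.mpr hsle
  -- lower bound for the sum
  have hsumm : Summable fun k : ℕ => q ^ (k ^ 2) := by
    apply Summable.of_nonneg_of_le (f := fun k => q ^ k)
    · intro k; positivity
    · intro k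
      exact pow_le_pow_of_le_one hq0.le hq1.le (Nat.le_self_pow two_ne_zero k)
    · exact summable_geometric_of_lt_one hq0.le hq1
  have hS : 1 + q + q ^ 4 ≤ ∑' k : ℕ, q ^ (k ^ 2) := by
    have := Summable.sum_le_tsum (f := fun k : ℕ => q ^ (k ^ 2)) ({0, 1, 2} : Finset ℕ)
      (fun k _ => by positivity) hsumm
    have h2 : ∑ k ∈ ({0, 1, 2} : Finset ℕ), q ^ (k ^ 2) = 1 + q + q ^ 4 := by
      norm_num [Finset.sum_insert, Finset.mem_insert]
      ring
    linarith [h2 ▸ this]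
  -- combine
  have hP0 : 0 < (1 - q)⁻¹ * (1 - q ^ 2)⁻¹ := by
    have h1 : 0 < 1 - q := by linarith
    have h2 : 0 < 1 - q ^ 2 := by nlinarith
    positivity
  have hA0 : 0 < 1 + 2 * q + 2 * q ^ 4 := by positivity
  have hA : 1 + 2 * q + 2 * q ^ 4 ≤ -1 + 2 * ∑' k : ℕ, q ^ (k ^ 2) := by linarith
  have hc : (1 - q)⁻¹ * (1 - q ^ 2)⁻¹ * (1 + 2 * q + 2 * q ^ 4) ≤ cConst p := by
    unfold cConst
    rw [← hxdef, ← hqdef]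
    exact mul_le_mul hP hA hA0.le (le_trans hP0.le hP)
  refine lt_of_lt_of_le ?_ hc
  -- final arithmetic
  have h1 : 0 < x - 1 := by linarith
  have h2 : 0 < x ^ 2 - 1 := by nlinarith
  have e1 : (1 - q)⁻¹ = x / (x - 1) := by
    rw [hqdef]; field_simp
  have e2 : (1 - q ^ 2)⁻¹ = x ^ 2 / (x ^ 2 - 1) := by
    rw [hqdef]; rw [inv_pow]
    rw [inv_eq_iff_eq_inv]
    field_simp
  rw [e1, e2, hqdef]
  rw [div_lt_iff₀ (by positivity)]
  field_simp
  nlinarith [mul_pos (pow_pos hx0 4) (mul_pos h1 h2), pow_pos hx0 2, pow_pos hx0 3, pow_pos hx0 4, pow_pos hx0 5]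
end

section
/- For all integers a₁ ≥ 12, we have 3·2^(a₁²/4) + (2^{a₁} − 1)·2^((a₁−1)²/4) + 2^(a₁²/4) ≤ (3·2^{a₁})^(log₂(3·2^{a₁})/4). -/
theorem a1_ge_12 (a₁ : ℕ) (ha : 12 ≤ a₁) :
    3 * (2 : ℝ) ^ ((a₁ : ℝ) ^ 2 / 4)
        + ((2 : ℝ) ^ a₁ - 1) * (2 : ℝ) ^ (((a₁ : ℝ) - 1) ^ 2 / 4)
        + (2 : ℝ) ^ ((a₁ : ℝ) ^ 2 / 4)
      ≤ (3 * (2 : ℝ) ^ a₁) ^ (Real.logb 2 (3 * 2 ^ a₁) / 4) := by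
  have hn : (12:ℝ) ≤ (a₁:ℝ) := by exact_mod_cast ha
  set n : ℝ := (a₁:ℝ) with hdefn
  set c : ℝ := Real.logb 2 3 with hdefc
  have hc : (1.5:ℝ) ≤ c := by
    rw [hdefc, Real.le_logb_iff_rpow_le (by norm_num) (by norm_num)]
    have h8 : ((2:ℝ)^(1.5:ℝ))^(2:ℕ) = 8 := by
      rw [← Real.rpow_natCast ((2:ℝ)^(1.5:ℝ)) 2, ← Real.rpow_mul (by norm_num)]
      rw [show (1.5:ℝ)*((2:ℕ):ℝ) = ((3:ℕ):ℝ) by norm_num, Real.rpow_natCast]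
      norm_num
    nlinarith [Real.rpow_pos_of_pos (show (0:ℝ) < 2 by norm_num) (1.5:ℝ)]
  have hpow : (2:ℝ)^a₁ = (2:ℝ)^(n:ℝ) := (Real.rpow_natCast 2 a₁).symm
  have h3 : (3:ℝ) * 2^a₁ = (2:ℝ)^(c+n) := by
    rw [Real.rpow_add (by norm_num), hdefc,
      Real.rpow_logb (by norm_num) (by norm_num) (by norm_num), hpow]
  have hlog : Real.logb 2 ((3:ℝ) * 2^a₁) = c + n := by
    rw [h3, Real.logb_rpow (by norm_num) (by norm_num)]
  rw [hlog, h3, ← Real.rpow_natCast 2 a₁,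
    ← Real.rpow_mul (by norm_num : (0:ℝ) ≤ 2)]
  have hA : 3 * (2:ℝ)^(n^2/4) + (2:ℝ)^(n^2/4) = (2:ℝ)^(2 + n^2/4) := by
    rw [Real.rpow_add (by norm_num),
      show (2:ℝ)^(2:ℝ) = 4 by
        rw [show (2:ℝ) = ((2:ℕ):ℝ) by norm_num, Real.rpow_natCast]; norm_num]
    ring
  have e1 : ((2:ℝ)^(n:ℝ) - 1) * (2:ℝ)^((n-1)^2/4) ≤ (2:ℝ)^((n+1)^2/4) := by
    calc ((2:ℝ)^(n:ℝ) - 1) * (2:ℝ)^((n-1)^2/4)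
        ≤ (2:ℝ)^(n:ℝ) * (2:ℝ)^((n-1)^2/4) := by
          apply mul_le_mul_of_nonneg_right (by linarith [Real.rpow_pos_of_pos (show (0:ℝ)<2 by norm_num) ((n-1)^2/4)])
            (Real.rpow_nonneg (by norm_num) _)
      _ = (2:ℝ)^(n + (n-1)^2/4) := (Real.rpow_add (by norm_num) _ _).symm
      _ = (2:ℝ)^((n+1)^2/4) := by ring_nf
  have e2 : (2:ℝ)^(2 + n^2/4) ≤ (2:ℝ)^((n+1)^2/4) :=
    Real.rpow_le_rpow_of_exponent_le (by norm_num) (by nlinarith)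
  have e3 : (2:ℝ)^((n+1)^2/4) + (2:ℝ)^((n+1)^2/4) = (2:ℝ)^(1 + (n+1)^2/4) := by
    rw [Real.rpow_add (by norm_num), Real.rpow_one]; ring
  have e4 : (2:ℝ)^(1 + (n+1)^2/4) ≤ (2:ℝ)^((c+n)*((c+n)/4)) :=
    Real.rpow_le_rpow_of_exponent_le (by norm_num) (by nlinarith)
  linarith
end
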